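/- arXiv:2501.14577 — 2 statements merged into one kernel-verified Lean document; each statement's English description precedes it below -/
import Mathlib

section
/- Let C₁, …, C_r be measurable subsets of a domain X, let D be a probability distribution on X, and let S be a sequence of m points sampled i.i.d. from D. Then the expectation over S of the sum of P[C_i] over all indices i with C_i ∩ S = ∅ is at most r/(m·e). -/
/-!
A sample of size `m` misses `Cᵢ` with probability `(1 - pᵢ)^m`, where `pᵢ = μ Cᵢ`, so by
linearity of expectation the expected missed mass is `∑ᵢ (1 - pᵢ)^m pᵢ`. Each term is at most
`pᵢ e^{-m pᵢ} ≤ 1/(m e)`, since `x e^{-x} ≤ e^{-1}`.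
-/

open MeasureTheory Real

lemma one_sub_pow_mul_le_one_div_mul_exp_one {a : ℝ} (ha₀ : 0 ≤ a) (ha₁ : a ≤ 1) {m : ℕ}
    (hm : 0 < m) : (1 - a) ^ m * a ≤ 1 / (m * exp 1) := by
  calc (1 - a) ^ m * a ≤ exp (-a) ^ m * a := by
        gcongr; exact one_sub_le_exp_neg a
    _ = m * a * exp (-(m * a)) / m := by
        rw [← exp_nat_mul]; field_simp
    _ ≤ exp (-1) / m := by gcongr; exact mul_exp_neg_le_exp_neg_one _
    _ = 1 / (m * exp 1) := by rw [exp_neg]; field_simp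

lemma setOf_forall_notMem_eq_pi {ι X : Type*} (C : Set X) :
    {S : ι → X | ∀ j, S j ∉ C} = Set.univ.pi fun _ => Cᶜ := by
  ext; simp

lemma measurableSet_setOf_forall_notMem {ι X : Type*} [Countable ι] [MeasurableSpace X]
    {C : Set X} (hC : MeasurableSet C) : MeasurableSet {S : ι → X | ∀ j, S j ∉ C} := by
  rw [setOf_forall_notMem_eq_pi]; exact .univ_pi fun _ => hC.compl

section Sample

variable {ι X : Type*} [Fintype ι] [MeasurableSpace X] (μ : Measure X) [IsProbabilityMeasure μ]
  {C : Set X}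

lemma measureReal_pi_forall_notMem (hC : MeasurableSet C) :
    (Measure.pi fun _ : ι => μ).real {S | ∀ j, S j ∉ C} = (1 - μ.real C) ^ Fintype.card ι := by
  rw [setOf_forall_notMem_eq_pi, measureReal_def, Measure.pi_pi, Finset.prod_const,
    ENNReal.toReal_pow, ← measureReal_def, probReal_compl_eq_one_sub hC, Finset.card_univ]

lemma integral_indicator_forall_notMem (hC : MeasurableSet C) (c : ℝ) :
    ∫ S, {S : ι → X | ∀ j, S j ∉ C}.indicator (fun _ => c) S ∂(Measure.pi fun _ => μ)
      = (1 - μ.real C) ^ Fintype.card ι * c := by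
  rw [integral_indicator_const _ (measurableSet_setOf_forall_notMem hC),
    measureReal_pi_forall_notMem μ hC, smul_eq_mul]

end Sample

open MeasureTheory Classical in
/-- Missed-mass lemma: for measurable sets `C₁, …, C_r` and `m` i.i.d. samples
from a probability distribution `μ`, the expected total probability mass of the
sets missed by the sample is at most `r/(m·e)`. -/
theorem expected_missed_mass_le
    {X : Type*} [MeasurableSpace X] (μ : Measure X) [IsProbabilityMeasure μ]
    (r m : ℕ) (hm : 0 < m) (C : Fin r → Set X) (hC : ∀ i, MeasurableSet (C i)) :
    ∫ S : Fin m → X,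
        (∑ i ∈ Finset.univ.filter (fun i : Fin r => ∀ j : Fin m, S j ∉ C i),
          (μ (C i)).toReal) ∂(Measure.pi fun _ => μ)
      ≤ r / (m * Real.exp 1) := by
  have hsum : ∀ S : Fin m → X,
      ∑ i ∈ Finset.univ.filter (fun i : Fin r => ∀ j : Fin m, S j ∉ C i), (μ (C i)).toReal
        = ∑ i, {S | ∀ j, S j ∉ C i}.indicator (fun _ => μ.real (C i)) S := by
    intro S
    simp only [Finset.sum_filter, Set.indicator_apply, Set.mem_ofPred_eq, measureReal_def]
  have hint : ∀ i, Integrable ({S : Fin m → X | ∀ j, S j ∉ C i}.indicator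
      fun _ => μ.real (C i)) (Measure.pi fun _ => μ) := fun i =>
    (integrable_const _).indicator (measurableSet_setOf_forall_notMem (hC i))
  simp_rw [hsum]
  rw [integral_finsetSum _ fun i _ => hint i]
  simp only [integral_indicator_forall_notMem μ (hC _), Fintype.card_fin]
  calc ∑ i, (1 - μ.real (C i)) ^ m * μ.real (C i) ≤ ∑ _i : Fin r, 1 / (m * exp 1) :=
        Finset.sum_le_sum fun i _ =>
          one_sub_pow_mul_le_one_div_mul_exp_one measureReal_nonneg measureReal_le_one hm
    _ = r / (m * exp 1) := by simp [div_eq_mul_inv]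
end

section
/- Let D be a probability distribution on [-B, B]^{d_K}, let q and k₁, …, k_m be i.i.d. samples from D, and let k_{π₁(q)} denote the sample closest to q in Euclidean norm. Then E[‖k_{π₁(q)} − q‖] ≤ 4·√(d_K)·B·m^{-1/(d_K+1)}. -/
/-!
Cut `[-B, B]^d` into `N^d` boxes of side `2B/N`. If the box of `q` contains a sample, the nearest
sample is within the box diameter `2√d B/N`; otherwise it is still within the cube diameter
`2√d B`. A box of mass `p` is missed by all `m` samples with probability `(1 - p)^m`, and
`p (1 - p)^m ≤ p e^{-mp} ≤ 1/(2m)`, so summing over the boxes the second case has probability at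
most `N^d/(2m)`. Taking `N = ⌊m^{1/(d+1)}⌋` balances the two terms; when this is below `2` the
diameter bound alone suffices.
-/

open MeasureTheory

lemma two_mul_le_exp {x : ℝ} (hx : 0 ≤ x) : 2 * x ≤ Real.exp x := by
  nlinarith [Real.quadratic_le_exp_of_nonneg hx, sq_nonneg (x - 1)]

lemma mul_one_sub_pow_le_one_div_two_mul {m : ℕ} (hm : 0 < m) {x : ℝ} (hx₀ : 0 ≤ x)
    (hx₁ : x ≤ 1) : x * (1 - x) ^ m ≤ 1 / (2 * m) := by
  have hm' : (0 : ℝ) < m := by exact_mod_cast hm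
  have hpow : (1 - x) ^ m ≤ Real.exp (-(m * x)) := by
    calc (1 - x) ^ m ≤ Real.exp (-x) ^ m := by
          gcongr
          linarith [Real.add_one_le_exp (-x)]
      _ = Real.exp (-(m * x)) := by rw [← Real.exp_nat_mul]; ring_nf
  calc x * (1 - x) ^ m ≤ x * Real.exp (-(m * x)) := by gcongr
    _ ≤ 1 / (2 * m) := by
      rw [Real.exp_neg, ← div_eq_mul_inv, div_le_div_iff₀ (Real.exp_pos _) (by positivity)]
      nlinarith [two_mul_le_exp (mul_nonneg hm'.le hx₀)]

lemma ENNReal.mul_one_sub_pow_le {m : ℕ} (hm : 0 < m) {p : ENNReal} (hp : p ≤ 1) :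
    p * (1 - p) ^ m ≤ ENNReal.ofReal (1 / (2 * m)) := by
  obtain ⟨x, hx₀, rfl⟩ : ∃ x : ℝ, 0 ≤ x ∧ ENNReal.ofReal x = p :=
    ⟨p.toReal, ENNReal.toReal_nonneg,
      ENNReal.ofReal_toReal (ne_top_of_le_ne_top ENNReal.one_ne_top hp)⟩
  have hx₁ : x ≤ 1 := ENNReal.ofReal_le_one.mp hp
  rw [← ENNReal.ofReal_one, ← ENNReal.ofReal_sub _ hx₀, ← ENNReal.ofReal_pow (by linarith),
    ← ENNReal.ofReal_mul hx₀]
  exact ENNReal.ofReal_le_ofReal (mul_one_sub_pow_le_one_div_two_mul hm hx₀ hx₁)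

section MissedCell

variable {X ι : Type*} [MeasurableSpace X] [Fintype ι] [MeasurableSpace ι]
  [MeasurableSingletonClass ι]

lemma measurableSet_forall_ne {c : X → ι} (hc : Measurable c) (m : ℕ) :
    MeasurableSet {p : (Fin m → X) × X | ∀ i, c (p.1 i) ≠ c p.2} := by
  simp only [Set.ofPred_forall]
  exact .iInter fun i ↦ (measurableSet_eq_fun (by fun_prop) (by fun_prop)).compl

lemma measureReal_forall_ne_le (μ : Measure X) [IsProbabilityMeasure μ] {c : X → ι}
    (hc : Measurable c) {m : ℕ} (hm : 0 < m) :
    ((Measure.pi fun _ : Fin m ↦ μ).prod μ).real {p | ∀ i, c (p.1 i) ≠ c p.2}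
      ≤ Fintype.card ι / (2 * m) := by
  have hslice (q : X) : Measure.pi (fun _ : Fin m ↦ μ) {k | ∀ i, c (k i) ≠ c q}
      = (1 - μ (c ⁻¹' {c q})) ^ m := by
    have : {k : Fin m → X | ∀ i, c (k i) ≠ c q} = Set.univ.pi fun _ ↦ (c ⁻¹' {c q})ᶜ := by
      ext; simp
    rw [this, Measure.pi_pi, measure_compl (hc (measurableSet_singleton _)) (measure_ne_top _ _),
      measure_univ, Finset.prod_const, Finset.card_univ, Fintype.card_fin]
  refine ENNReal.toReal_le_of_le_ofReal (by positivity) ?_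
  calc (Measure.pi fun _ : Fin m ↦ μ).prod μ {p | ∀ i, c (p.1 i) ≠ c p.2}
      = ∫⁻ q, (1 - μ (c ⁻¹' {c q})) ^ m ∂μ := by
        rw [Measure.prod_apply_symm (measurableSet_forall_ne hc m)]
        exact lintegral_congr fun q ↦ hslice q
    _ = ∑ j, μ (c ⁻¹' {j}) * (1 - μ (c ⁻¹' {j})) ^ m := by
        rw [← lintegral_map (f := fun j ↦ (1 - μ (c ⁻¹' {j})) ^ m) (measurable_of_countable _) hc,
          lintegral_fintype]
        simp only [Measure.map_apply hc (measurableSet_singleton _), mul_comm]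
    _ ≤ ∑ _j : ι, ENNReal.ofReal (1 / (2 * m)) :=
        Finset.sum_le_sum fun j _ ↦ ENNReal.mul_one_sub_pow_le hm prob_le_one
    _ = ENNReal.ofReal (Fintype.card ι / (2 * m)) := by
        rw [Finset.sum_const, Finset.card_univ, nsmul_eq_mul, ← ENNReal.ofReal_natCast,
          ← ENNReal.ofReal_mul (by positivity), mul_one_div]

end MissedCell

lemma integral_le_add_measureReal_mul {α : Type*} [MeasurableSpace α] {μ : Measure α}
    [IsProbabilityMeasure μ] {f : α → ℝ} {A : Set α} (hA : MeasurableSet A) {a b : ℝ}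
    (hb : 0 ≤ b) (hf : 0 ≤ᵐ[μ] f) (hfa : ∀ᵐ x ∂μ, f x ≤ a) (hfb : ∀ᵐ x ∂μ, x ∉ A → f x ≤ b) :
    ∫ x, f x ∂μ ≤ b + μ.real A * a := by
  have hle : f ≤ᵐ[μ] fun x ↦ b + A.indicator (fun _ ↦ a) x := by
    filter_upwards [hfa, hfb] with x hxa hxb
    by_cases hx : x ∈ A
    · rw [Set.indicator_of_mem hx]; linarith
    · rw [Set.indicator_of_notMem hx, add_zero]; exact hxb hx
  have hint : Integrable (A.indicator fun _ ↦ a) μ := (integrable_const a).indicator hA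
  calc ∫ x, f x ∂μ ≤ ∫ x, b + A.indicator (fun _ ↦ a) x ∂μ :=
        integral_mono_of_nonneg hf ((integrable_const b).add hint) hle
    _ = b + μ.real A * a := by
        rw [integral_add (integrable_const b) hint, integral_const, integral_indicator_const _ hA]
        simp

lemma ae_forall_mem_prod {X : Type*} [MeasurableSpace X] {μ : Measure X} [SigmaFinite μ]
    {s : Set X} (hs : ∀ᵐ x ∂μ, x ∈ s) (m : ℕ) :
    ∀ᵐ p ∂(Measure.pi fun _ : Fin m ↦ μ).prod μ, (∀ i, p.1 i ∈ s) ∧ p.2 ∈ s := by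
  have hpi : ∀ᵐ k ∂Measure.pi fun _ : Fin m ↦ μ, ∀ i, k i ∈ s :=
    ae_all_iff.2 fun i ↦ (Measure.quasiMeasurePreserving_eval _ i).ae hs
  exact (Measure.quasiMeasurePreserving_fst.ae hpi).and (Measure.quasiMeasurePreserving_snd.ae hs)

-- The `min` puts the right endpoint `a + (n + 1) * h` into the last cell.
noncomputable def gridIndex (a h : ℝ) (n : ℕ) (t : ℝ) : Fin (n + 1) :=
  ⟨min n ⌊(t - a) / h⌋₊, Nat.lt_succ_of_le (min_le_left _ _)⟩

lemma measurable_gridIndex (a h : ℝ) (n : ℕ) : Measurable (gridIndex a h n) :=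
  (measurable_from_nat
    (f := fun k ↦ (⟨min n k, Nat.lt_succ_of_le (min_le_left _ _)⟩ : Fin (n + 1)))).comp
      (Nat.measurable_floor.comp (by fun_prop))

lemma gridIndex_mul_le {a h t : ℝ} {n : ℕ} (hh : 0 < h) (ht : t ∈ Set.Icc a (a + (n + 1) * h)) :
    (gridIndex a h n t : ℝ) * h ≤ t - a ∧ t - a ≤ ((gridIndex a h n t : ℝ) + 1) * h := by
  set u := (t - a) / h
  have hu₀ : 0 ≤ u := div_nonneg (by linarith [ht.1]) hh.le
  have hu₁ : u ≤ n + 1 := (div_le_iff₀ hh).2 (by linarith [ht.2])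
  suffices (gridIndex a h n t : ℝ) ≤ u ∧ u ≤ (gridIndex a h n t : ℝ) + 1 by
    rwa [le_div_iff₀ hh, div_le_iff₀ hh] at this
  rcases le_total ⌊u⌋₊ n with hle | hle
  · have : (gridIndex a h n t : ℕ) = ⌊u⌋₊ := min_eq_right hle
    rw [this]
    exact ⟨Nat.floor_le hu₀, (Nat.lt_floor_add_one u).le⟩
  · have : (gridIndex a h n t : ℕ) = n := min_eq_left hle
    rw [this]
    exact ⟨(Nat.cast_le.2 hle).trans (Nat.floor_le hu₀), hu₁⟩

lemma abs_sub_le_of_gridIndex_eq {a h t t' : ℝ} {n : ℕ} (hh : 0 < h)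
    (ht : t ∈ Set.Icc a (a + (n + 1) * h)) (ht' : t' ∈ Set.Icc a (a + (n + 1) * h))
    (heq : gridIndex a h n t = gridIndex a h n t') : |t - t'| ≤ h := by
  have h₁ := gridIndex_mul_le hh ht
  have h₂ := gridIndex_mul_le hh ht'
  rw [heq] at h₁
  rw [abs_sub_le_iff]
  constructor <;> nlinarith

lemma EuclideanSpace.norm_le_sqrt_card_mul {ι : Type*} [Fintype ι] {x : EuclideanSpace ℝ ι}
    {c : ℝ} (hc : 0 ≤ c) (hx : ∀ i, |x i| ≤ c) : ‖x‖ ≤ √(Fintype.card ι) * c := by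
  rw [EuclideanSpace.norm_eq, ← Real.sqrt_sq hc, ← Real.sqrt_mul (Nat.cast_nonneg _)]
  gcongr
  calc ∑ i, ‖x i‖ ^ 2 ≤ ∑ _i : ι, c ^ 2 := by
        gcongr with i
        rw [Real.norm_eq_abs]
        exact hx i
    _ = Fintype.card ι * c ^ 2 := by simp

section Cube

variable {ι : Type*} {B : ℝ}

noncomputable def cubeCell (B : ℝ) (n : ℕ) (x : EuclideanSpace ℝ ι) : ι → Fin (n + 1) :=
  fun j ↦ gridIndex (-B) (2 * B / (n + 1)) n (x j)

lemma measurable_cubeCell (B : ℝ) (n : ℕ) : Measurable (cubeCell (ι := ι) B n) :=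
  measurable_pi_lambda _ fun _ ↦ (measurable_gridIndex _ _ n).comp (by fun_prop)

variable [Fintype ι]

lemma norm_sub_le_of_mem_cube (hB : 0 ≤ B) {x y : EuclideanSpace ℝ ι}
    (hx : ∀ j, x j ∈ Set.Icc (-B) B) (hy : ∀ j, y j ∈ Set.Icc (-B) B) :
    ‖x - y‖ ≤ √(Fintype.card ι) * (2 * B) :=
  EuclideanSpace.norm_le_sqrt_card_mul (by linarith) fun j ↦ by
    simp only [PiLp.sub_apply, abs_sub_le_iff]
    constructor <;> linarith [(hx j).1, (hx j).2, (hy j).1, (hy j).2]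

lemma norm_sub_le_of_cubeCell_eq (hB : 0 < B) {n : ℕ} {x y : EuclideanSpace ℝ ι}
    (hx : ∀ j, x j ∈ Set.Icc (-B) B) (hy : ∀ j, y j ∈ Set.Icc (-B) B)
    (hxy : cubeCell B n x = cubeCell B n y) :
    ‖x - y‖ ≤ √(Fintype.card ι) * (2 * B / (n + 1)) := by
  have hend : Set.Icc (-B) B = Set.Icc (-B) (-B + (n + 1) * (2 * B / (n + 1))) := by
    congr 1; field_simp; ring
  refine EuclideanSpace.norm_le_sqrt_card_mul (by positivity) fun j ↦ ?_
  exact abs_sub_le_of_gridIndex_eq (by positivity) (hend ▸ hx j) (hend ▸ hy j) (congrFun hxy j)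

end Cube

section NearestNeighbor

variable {ι : Type*} [Fintype ι] {m : ℕ} {B : ℝ} {μ : Measure (EuclideanSpace ℝ ι)}
  [IsProbabilityMeasure μ]

lemma iInf_norm_sub_le {E κ : Type*} [SeminormedAddCommGroup E] (k : κ → E) (q : E) (i : κ) :
    ⨅ j, ‖k j - q‖ ≤ ‖k i - q‖ :=
  ciInf_le ⟨0, by rintro _ ⟨j, rfl⟩; exact norm_nonneg _⟩ i

lemma integral_iInf_norm_sub_le_diam (hm : 0 < m) (hB : 0 ≤ B)
    (hsupp : ∀ᵐ x ∂μ, ∀ j, x j ∈ Set.Icc (-B) B) :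
    ∫ p : (Fin m → EuclideanSpace ℝ ι) × EuclideanSpace ℝ ι,
        (⨅ i : Fin m, ‖p.1 i - p.2‖) ∂((Measure.pi fun _ ↦ μ).prod μ)
      ≤ √(Fintype.card ι) * (2 * B) := by
  have hle : ∀ᵐ p ∂(Measure.pi fun _ : Fin m ↦ μ).prod μ,
      ⨅ i : Fin m, ‖p.1 i - p.2‖ ≤ √(Fintype.card ι) * (2 * B) := by
    filter_upwards [ae_forall_mem_prod hsupp m] with p ⟨hk, hq⟩
    exact (iInf_norm_sub_le p.1 p.2 ⟨0, hm⟩).trans (norm_sub_le_of_mem_cube hB (hk _) hq)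
  refine (integral_mono_of_nonneg (ae_of_all _ fun p ↦ Real.iInf_nonneg fun _ ↦ norm_nonneg _)
    (integrable_const _) hle).trans_eq ?_
  simp

lemma integral_iInf_norm_sub_le_grid (hm : 0 < m) (hB : 0 < B)
    (hsupp : ∀ᵐ x ∂μ, ∀ j, x j ∈ Set.Icc (-B) B) (n : ℕ) :
    ∫ p : (Fin m → EuclideanSpace ℝ ι) × EuclideanSpace ℝ ι,
        (⨅ i : Fin m, ‖p.1 i - p.2‖) ∂((Measure.pi fun _ ↦ μ).prod μ)
      ≤ √(Fintype.card ι) * (2 * B / (n + 1))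
        + ((n + 1 : ℕ) : ℝ) ^ Fintype.card ι / (2 * m) * (√(Fintype.card ι) * (2 * B)) := by
  classical
  have hc := measurable_cubeCell (ι := ι) B n
  have hmiss := measureReal_forall_ne_le μ hc hm
  rw [Fintype.card_fun, Fintype.card_fin, Nat.cast_pow] at hmiss
  refine (integral_le_add_measureReal_mul (a := √(Fintype.card ι) * (2 * B))
    (b := √(Fintype.card ι) * (2 * B / (n + 1))) (measurableSet_forall_ne hc m) (by positivity)
    (ae_of_all _ fun p ↦ Real.iInf_nonneg fun _ ↦ norm_nonneg _) ?_ ?_).trans ?_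
  · filter_upwards [ae_forall_mem_prod hsupp m] with p ⟨hk, hq⟩
    exact (iInf_norm_sub_le p.1 p.2 ⟨0, hm⟩).trans (norm_sub_le_of_mem_cube hB.le (hk _) hq)
  · filter_upwards [ae_forall_mem_prod hsupp m] with p ⟨hk, hq⟩ hp
    obtain ⟨i, hi⟩ : ∃ i, cubeCell B n (p.1 i) = cubeCell B n p.2 := by simpa using hp
    exact (iInf_norm_sub_le p.1 p.2 i).trans (norm_sub_le_of_cubeCell_eq hB (hk i) hq hi)
  · gcongr

end NearestNeighbor

lemma two_mul_div_add_pow_div_mul_le {d : ℕ} {K B N s : ℝ} (hK : 0 ≤ K) (hB : 0 ≤ B)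
    (hN : 2 ≤ N) (hNs : N ≤ s) (hsN : s ≤ N + 1) :
    K * (2 * B / N) + N ^ d / (2 * s ^ (d + 1)) * (K * (2 * B)) ≤ 4 * K * B / s := by
  have hs : 0 < s := by linarith
  have hKB : 0 ≤ K * B := mul_nonneg hK hB
  have hcell : 2 * B / N ≤ 3 * B / s := by
    rw [div_le_div_iff₀ (by linarith) hs]; nlinarith
  have hmiss : N ^ d / (2 * s ^ (d + 1)) ≤ 1 / (2 * s) := by
    rw [div_le_div_iff₀ (by positivity) (by positivity), pow_succ]
    have := pow_le_pow_left₀ (by linarith) hNs d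
    nlinarith [pow_pos hs d]
  calc K * (2 * B / N) + N ^ d / (2 * s ^ (d + 1)) * (K * (2 * B))
      ≤ K * (3 * B / s) + 1 / (2 * s) * (K * (2 * B)) := by gcongr
    _ = 4 * K * B / s := by field_simp; ring

/-- Expected nearest-neighbor distance bound: for `q, k₁, …, k_m` i.i.d. from a
distribution supported on `[-B,B]^{d_K}`, the expected distance from `q` to its
nearest sample is at most `4·√(d_K)·B·m^{-1/(d_K+1)}`. -/
theorem expected_nearest_neighbor_dist_le
    (dK m : ℕ) (hm : 0 < m) (B : ℝ) (hB : 0 < B)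
    (μ : Measure (EuclideanSpace ℝ (Fin dK))) [IsProbabilityMeasure μ]
    (hsupp : ∀ᵐ x ∂μ, ∀ i, x i ∈ Set.Icc (-B) B) :
    ∫ p : (Fin m → EuclideanSpace ℝ (Fin dK)) × EuclideanSpace ℝ (Fin dK),
        (⨅ i : Fin m, ‖p.1 i - p.2‖) ∂((Measure.pi fun _ => μ).prod μ)
      ≤ 4 * Real.sqrt dK * B * (m:ℝ) ^ (-(1:ℝ)/(dK+1)) := by
  set s := (m : ℝ) ^ ((dK + 1 : ℕ) : ℝ)⁻¹
  have hs_pos : 0 < s := by positivity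
  have hs_pow : s ^ (dK + 1) = m :=
    Real.rpow_inv_natCast_pow (Nat.cast_nonneg m) (Nat.succ_ne_zero dK)
  have hrhs : 4 * √dK * B * (m : ℝ) ^ (-(1 : ℝ) / (dK + 1)) = 4 * √dK * B / s := by
    rw [neg_div, Real.rpow_neg (Nat.cast_nonneg m), one_div, div_eq_mul_inv]
    simp only [s, Nat.cast_succ]
  rw [hrhs]
  rcases lt_or_ge s 2 with hs | hs
  · have hdiam := integral_iInf_norm_sub_le_diam hm hB.le hsupp
    rw [Fintype.card_fin] at hdiam
    refine hdiam.trans ?_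
    rw [le_div_iff₀ hs_pos]
    nlinarith [mul_nonneg (Real.sqrt_nonneg dK) hB.le]
  · obtain ⟨n, hn⟩ := Nat.exists_eq_succ_of_ne_zero (Nat.floor_pos.2 (by linarith : 1 ≤ s)).ne'
    have hgrid := integral_iInf_norm_sub_le_grid hm hB hsupp n
    have hN : (n : ℝ) + 1 = ⌊s⌋₊ := by rw [hn, Nat.cast_succ]
    rw [Fintype.card_fin, ← hs_pow, Nat.cast_succ, hN] at hgrid
    refine hgrid.trans (two_mul_div_add_pow_div_mul_le (Real.sqrt_nonneg _) hB.le ?_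
      (Nat.floor_le hs_pos.le) (Nat.lt_floor_add_one s).le)
    exact_mod_cast Nat.le_floor (by exact_mod_cast hs)
end
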